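/- From the axioms of AX^b_p, the laws α.(∂(τ.P) ⊕_r R) = α.(P ⊕_r R) and α.∂(τ.P) = α.P are derivable, using axioms A4, P1, P3 and BP. -/

import Mathlib

open scoped BigOperators
open Classical

namespace PBB

structure Distr (X : Type) where
  f : X → ℝ
  nonneg : ∀ x, 0 ≤ f x
  fin : (Function.support f).Finite
  sum_one : ∑ᶠ x, f x = 1

namespace Distr

variable {X : Type}

noncomputable def dirac (E : X) : Distr X where
  f := fun x => if x = E then 1 else 0
  nonneg := fun x => by by_cases h : x = E <;> simp [h]
  fin := Set.Finite.subset (Set.finite_singleton E) (by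
    intro x hx
    simp only [Function.mem_support] at hx
    by_contra h
    simp only [Set.mem_singleton_iff] at h
    simp [h] at hx)
  sum_one := by
    rw [finsum_eq_single _ E (by intro x hx; simp [hx])]
    simp

noncomputable def mix (r : ℝ) (h0 : 0 ≤ r) (h1 : r ≤ 1) (μ ν : Distr X) : Distr X where
  f := fun x => r * μ.f x + (1 - r) * ν.f x
  nonneg := fun x =>
    add_nonneg (mul_nonneg h0 (μ.nonneg x)) (mul_nonneg (by linarith) (ν.nonneg x))
  fin := Set.Finite.subset (μ.fin.union ν.fin) (by
    intro x hx
    simp only [Function.mem_support] at hx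
    by_contra h
    simp only [Set.mem_union, Function.mem_support, not_or, not_not] at h
    simp [h.1, h.2] at hx)
  sum_one := by
    have hf : (Function.support fun x => r * μ.f x).Finite :=
      Set.Finite.subset μ.fin (by
        intro x hx
        simp only [Function.mem_support] at hx ⊢
        intro h; simp [h] at hx)
    have hg : (Function.support fun x => (1 - r) * ν.f x).Finite :=
      Set.Finite.subset ν.fin (by
        intro x hx
        simp only [Function.mem_support] at hx ⊢
        intro h; simp [h] at hx)
    rw [finsum_add_distrib hf hg, ← mul_finsum _ _, ← mul_finsum _ _,
      μ.sum_one, ν.sum_one]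
    ring

end Distr

def IsMix {X : Type} (r : ℝ) (μ ν ξ : Distr X) : Prop :=
  ∀ x, ξ.f x = r * μ.f x + (1 - r) * ν.f x

def IsCombo {X I : Type} [Fintype I] (p : I → ℝ) (μs : I → Distr X) (ξ : Distr X) : Prop :=
  (∀ i, 0 ≤ p i) ∧ (∑ i, p i = 1) ∧ ∀ x, ξ.f x = ∑ i, p i * (μs i).f x

/-! ### The probabilistic process calculus -/

mutual
/-- Non-deterministic processes: `E ::= 0 | α.P | E + E`. -/
inductive PE (Act : Type) : Type where
  | zero : PE Act
  | pre : Act → PP Act → PE Act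
  | plus : PE Act → PE Act → PE Act

/-- Probabilistic processes: `P ::= ∂(E) | P ⊕_r P` with `r ∈ (0,1)`. -/
inductive PP (Act : Type) : Type where
  | dirac : PE Act → PP Act
  | pchoice : PP Act → (r : ℝ) → 0 < r → r < 1 → PP Act → PP Act
end

variable {Act : Type}

/-- The distribution `⟦P⟧` denoted by a probabilistic process. -/
noncomputable def den : PP Act → Distr (PE Act)
  | .dirac E => Distr.dirac E
  | .pchoice P r h0 h1 Q => Distr.mix r h0.le h1.le (den P) (den Q)

/-- The transition relation `E →α μ` on non-deterministic processes. -/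
inductive pstep : PE Act → Act → Distr (PE Act) → Prop where
  | pre (α : Act) (P : PP Act) : pstep (.pre α P) α (den P)
  | left {E₁ E₂ : PE Act} {α : Act} {μ : Distr (PE Act)} :
      pstep E₁ α μ → pstep (.plus E₁ E₂) α μ
  | right {E₁ E₂ : PE Act} {α : Act} {μ : Distr (PE Act)} :
      pstep E₂ α μ → pstep (.plus E₁ E₂) α μ

/-- The (combined) transition relation `μ →α μ'` on distributions. -/
def dstep (μ : Distr (PE Act)) (α : Act) (μ' : Distr (PE Act)) : Prop :=
  ∃ (I : Type) (_ : Fintype I) (p : I → ℝ) (Es : I → PE Act) (μs : I → Distr (PE Act)),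
    IsCombo p (fun i => Distr.dirac (Es i)) μ ∧ IsCombo p μs μ' ∧
    ∀ i, pstep (Es i) α (μs i)

variable (τ : Act)

/-- The partial silent step `μ →(τ) μ'`. -/
def ptau (μ μ' : Distr (PE Act)) : Prop :=
  dstep μ τ μ' ∨
  ∃ (s : ℝ) (μ₁ μ₂ μ₁' : Distr (PE Act)), 0 ≤ s ∧ s ≤ 1 ∧
    IsMix s μ₁ μ₂ μ ∧ IsMix s μ₁' μ₂ μ' ∧ dstep μ₁ τ μ₁'

/-- `μ ⟹ μ'`: the reflexive-transitive closure of `→(τ)`. -/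
def wtau : Distr (PE Act) → Distr (PE Act) → Prop :=
  Relation.ReflTransGen (ptau τ)

/-- The optional step `μ →(α) μ'`. -/
def optStep (μ : Distr (PE Act)) (α : Act) (μ' : Distr (PE Act)) : Prop :=
  dstep μ α μ' ∨ (α = τ ∧ ptau τ μ μ')

/-- Weak decomposability of a relation on distributions. -/
def WeaklyDecomposable (R : Distr (PE Act) → Distr (PE Act) → Prop) : Prop :=
  ∀ (I : Type) (_ : Fintype I) (p : I → ℝ) (μs : I → Distr (PE Act))
    (μ ν : Distr (PE Act)),
    R μ ν → IsCombo p μs μ →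
    ∃ (ν' : Distr (PE Act)) (νs : I → Distr (PE Act)),
      wtau τ ν ν' ∧ R μ ν' ∧ IsCombo p νs ν' ∧ ∀ i, R (μs i) (νs i)

/-- Decomposability of a relation on distributions. -/
def Decomposable (R : Distr (PE Act) → Distr (PE Act) → Prop) : Prop :=
  ∀ (I : Type) (_ : Fintype I) (p : I → ℝ) (μs : I → Distr (PE Act))
    (μ ν : Distr (PE Act)),
    R μ ν → IsCombo p μs μ →
    ∃ νs : I → Distr (PE Act), IsCombo p νs ν ∧ ∀ i, R (μs i) (νs i)

/-- Branching probabilistic bisimulation relations. -/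
def IsBranchingBisim (R : Distr (PE Act) → Distr (PE Act) → Prop) : Prop :=
  Symmetric R ∧ WeaklyDecomposable τ R ∧
  ∀ μ ν α μ', R μ ν → dstep μ α μ' →
    ∃ ν' ν'', wtau τ ν ν' ∧ optStep τ ν' α ν'' ∧ R μ ν' ∧ R μ' ν''

/-- Branching probabilistic bisimilarity `≈_b`. -/
def bb (μ ν : Distr (PE Act)) : Prop :=
  ∃ R, IsBranchingBisim τ R ∧ R μ ν

/-- Strong probabilistic bisimulation relations. -/
def IsStrongBisim (R : Distr (PE Act) → Distr (PE Act) → Prop) : Prop :=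
  Symmetric R ∧ Decomposable R ∧
  ∀ μ ν α μ', R μ ν → dstep μ α μ' →
    ∃ ν', dstep ν α ν' ∧ R μ' ν'

/-- Strong probabilistic bisimilarity `∼`. -/
def sb (μ ν : Distr (PE Act)) : Prop :=
  ∃ R, IsStrongBisim R ∧ R μ ν

/-- Rooted branching probabilistic bisimulation relations. -/
def IsRootedBranchingBisim (R : Distr (PE Act) → Distr (PE Act) → Prop) : Prop :=
  Symmetric R ∧ Decomposable R ∧
  ∀ μ ν α μ', R μ ν → dstep μ α μ' →
    ∃ ν', dstep ν α ν' ∧ bb τ μ' ν'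

/-- Rooted branching probabilistic bisimilarity `≈_rb`. -/
def rbb (μ ν : Distr (PE Act)) : Prop :=
  ∃ R, IsRootedBranchingBisim τ R ∧ R μ ν

/-- `≈_b`-stability of a distribution. -/
def Stable (μ : Distr (PE Act)) : Prop :=
  ∀ μ', wtau τ μ μ' → bb τ μ μ' → μ' = μ

/-- A state is rigid iff it admits no inert `τ`-transition. -/
def Rigid (E : PE Act) : Prop :=
  ¬ ∃ μ, pstep E τ μ ∧ bb τ (Distr.dirac E) μ

/-- `E ⊑ P`: every transition of `E` is matched by an optional transition of `⟦P⟧`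
with branching probabilistically bisimilar target. -/
def sq (E : PE Act) (P : PP Act) : Prop :=
  ∀ α μ, pstep E α μ → ∃ ν, optStep τ (den P) α ν ∧ bb τ μ ν


/-! ### The equational theory `AX^b_p` -/

mutual
/-- Provable equality between non-deterministic processes in `AX^b_p`:
axioms A1–A4, P1–P3, C, BP and G. -/
inductive AxE (τ : Act) : PE Act → PE Act → Prop where
  | refl (E) : AxE τ E E
  | symm {E F} : AxE τ E F → AxE τ F E
  | trans {E F G} : AxE τ E F → AxE τ F G → AxE τ E G
  | congPre (α : Act) {P Q} : AxP τ P Q → AxE τ (.pre α P) (.pre α Q)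
  | congPlusL {E E' F} : AxE τ E E' → AxE τ (.plus E F) (.plus E' F)
  | congPlusR {E F F'} : AxE τ F F' → AxE τ (.plus E F) (.plus E F')
  | A1 (E F) : AxE τ (.plus E F) (.plus F E)
  | A2 (E F G) : AxE τ (.plus (.plus E F) G) (.plus E (.plus F G))
  | A3 (E) : AxE τ (.plus E E) E
  | A4 (E) : AxE τ (.plus E .zero) E
  | C (α : Act) (P Q : PP Act) (r : ℝ) (h0 : 0 < r) (h1 : r < 1) :
      AxE τ (.plus (.pre α P) (.pre α Q))
            (.plus (.pre α P) (.plus (.pre α (.pchoice P r h0 h1 Q)) (.pre α Q)))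
  | BP (α : Act) (E : PE Act) (P Q : PP Act) (r : ℝ) (h0 : 0 < r) (h1 : r < 1)
      (h : sq τ E P) :
      AxE τ (.pre α (.pchoice (.dirac (.plus E (.pre τ P))) r h0 h1 Q))
            (.pre α (.pchoice P r h0 h1 Q))
  | G (α : Act) (E F : PE Act) (Q : PP Act) (r : ℝ) (h0 : 0 < r) (h1 : r < 1)
      (h : sq τ E (.dirac F)) :
      AxE τ (.pre α (.pchoice (.dirac (.plus E F)) r h0 h1 Q))
            (.pre α (.pchoice (.dirac F) r h0 h1 Q))

/-- Provable equality between probabilistic processes in `AX^b_p`. -/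
inductive AxP (τ : Act) : PP Act → PP Act → Prop where
  | refl (P) : AxP τ P P
  | symm {P Q} : AxP τ P Q → AxP τ Q P
  | trans {P Q R} : AxP τ P Q → AxP τ Q R → AxP τ P R
  | congDirac {E F} : AxE τ E F → AxP τ (.dirac E) (.dirac F)
  | congChoiceL (r : ℝ) (h0 : 0 < r) (h1 : r < 1) {P P' Q} :
      AxP τ P P' → AxP τ (.pchoice P r h0 h1 Q) (.pchoice P' r h0 h1 Q)
  | congChoiceR (r : ℝ) (h0 : 0 < r) (h1 : r < 1) {P Q Q'} :
      AxP τ Q Q' → AxP τ (.pchoice P r h0 h1 Q) (.pchoice P r h0 h1 Q')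
  | P1 (P Q : PP Act) (r s : ℝ) (h0 : 0 < r) (h1 : r < 1) (g0 : 0 < s) (g1 : s < 1)
      (hs : s = 1 - r) :
      AxP τ (.pchoice P r h0 h1 Q) (.pchoice Q s g0 g1 P)
  | P2 (P Q R : PP Act) (r s rb sb : ℝ)
      (h0 : 0 < r) (h1 : r < 1) (g0 : 0 < s) (g1 : s < 1)
      (hb0 : 0 < rb) (hb1 : rb < 1) (gb0 : 0 < sb) (gb1 : sb < 1)
      (hr : r = rb * sb) (hs : (1 - r) * (1 - s) = 1 - sb) :
      AxP τ (.pchoice P r h0 h1 (.pchoice Q s g0 g1 R))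
            (.pchoice (.pchoice P rb hb0 hb1 Q) sb gb0 gb1 R)
  | P3 (P : PP Act) (r : ℝ) (h0 : 0 < r) (h1 : r < 1) :
      AxP τ (.pchoice P r h0 h1 P) P
end


instance : Trans (AxE τ) (AxE τ) (AxE τ) := ⟨AxE.trans⟩

theorem sq_zero (P : PP Act) : sq τ .zero P := by
  intro _ _ h
  cases h

theorem AxE.zero_plus (E : PE Act) : AxE τ (.plus .zero E) E :=
  (AxE.A1 _ _).trans (AxE.A4 _)

theorem AxE.pre_dirac_tau_choice (α : Act) (P R : PP Act) (r : ℝ) (h0 : 0 < r) (h1 : r < 1) :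
    AxE τ (.pre α (.pchoice (.dirac (.pre τ P)) r h0 h1 R)) (.pre α (.pchoice P r h0 h1 R)) :=
  (AxE.congPre α (AxP.congChoiceL r h0 h1 (AxP.congDirac (AxE.zero_plus τ _).symm))).trans
    (AxE.BP α .zero P R r h0 h1 (sq_zero τ P))

theorem AxE.pre_dirac_tau (α : Act) (P : PP Act) :
    AxE τ (.pre α (.dirac (.pre τ P))) (.pre α P) := by
  have h0 : (0 : ℝ) < 1 / 2 := by norm_num
  have h1 : (1 : ℝ) / 2 < 1 := by norm_num
  let τP : PP Act := .dirac (.pre τ P)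
  calc
    AxE τ (.pre α τP) (.pre α (.pchoice τP (1 / 2) h0 h1 τP)) :=
      AxE.congPre α (AxP.P3 _ _ h0 h1).symm
    AxE τ _ (.pre α (.pchoice P (1 / 2) h0 h1 τP)) := AxE.pre_dirac_tau_choice τ α P τP _ h0 h1
    AxE τ _ (.pre α (.pchoice τP (1 / 2) h0 h1 P)) :=
      AxE.congPre α (AxP.P1 _ _ _ _ h0 h1 h0 h1 (by norm_num))
    AxE τ _ (.pre α (.pchoice P (1 / 2) h0 h1 P)) := AxE.pre_dirac_tau_choice τ α P P _ h0 h1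
    AxE τ _ (.pre α P) := AxE.congPre α (AxP.P3 _ _ h0 h1)

/-- The laws `α.(∂(τ.P) ⊕_r R) = α.(P ⊕_r R)` and `α.∂(τ.P) = α.P` are derivable
in `AX^b_p`. -/
theorem statement14 {Act : Type} (τ : Act) :
    (∀ (α : Act) (P R : PP Act) (r : ℝ) (h0 : 0 < r) (h1 : r < 1),
      AxE τ (.pre α (.pchoice (.dirac (.pre τ P)) r h0 h1 R))
            (.pre α (.pchoice P r h0 h1 R))) ∧
    (∀ (α : Act) (P : PP Act), AxE τ (.pre α (.dirac (.pre τ P))) (.pre α P)) :=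
  ⟨AxE.pre_dirac_tau_choice τ, AxE.pre_dirac_tau τ⟩

end PBB
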